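/- arXiv:2509.12693 — 2 statements merged into one kernel-verified Lean document; each statement's English description precedes it below -/
import Mathlib

section
/- Let q be a prime power, k < n ≤ m, α_1,...,α_n ∈ F_{q^m} linearly independent over F_q, η₁, η₂ ∈ F_{q^m}*, 0 ≤ h ≤ k-1, 0 ≤ t₁ < t₂ ≤ n-k-1. The twisted Gabidulin code C₂ with two twists (generator matrix: Moore matrix rows (α_j^{q^i})_j for i ≠ h, and row h replaced by (α_j^{q^h} + η₁ α_j^{q^{k+t₁}} + η₂ α_j^{q^{k+t₂}})_j) is MRD if and only if for every full-rank V ∈ F_q^{k×n}: η₁ det(V·M^{(h,k+t₁)ᵀ}) + η₂ det(V·M^{(h,k+t₂)ᵀ}) ≠ -det(V·Mᵀ), where M is the k×n Moore matrix of α and M^{(h,s)} is M with row h replaced by (α_j^{q^s})_j. -/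
/-!
A codeword `c` of rank weight `w` has an `n - w`-dimensional space of `F_q`-relations among its
entries, so `w ≤ n - k` exactly when some full-rank `V ∈ F_q^{k×n}` annihilates `c`; for
`c = u G` with `u ≠ 0` this says `V Gᵀ` is singular. As the Singleton bound is always attained,
MRD is therefore equivalent to `det (V Gᵀ) ≠ 0` for all full-rank `V`, and expanding this
determinant along the twisted column gives the stated condition.

That `G` has full rank is the usual linearized-polynomial argument: a relation `∑ uᵢ Gᵢ = 0` makes
`∑ uᵢ X^{q^i} + u_h η₁ X^{q^{k+t₁}} + u_h η₂ X^{q^{k+t₂}}` vanish on the `F_q`-span of the `α_j`,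
which has `q^n` elements, while its degree is less than `q^n`.
-/

open Finset Matrix Submodule Module

section RankWeight

variable (Fq : Type*) {K ι : Type*} [Field Fq] [Field K] [Algebra Fq K] [Fintype ι]

noncomputable def rankWeight (c : ι → K) : ℕ :=
  finrank Fq (span Fq (Set.range c))

variable {Fq}

theorem rankWeight_add_finrank_ker (c : ι → K) :
    rankWeight Fq c + finrank Fq (LinearMap.ker (Fintype.linearCombination Fq c)) =
      Fintype.card ι := by
  rw [rankWeight, ← Fintype.range_linearCombination, LinearMap.finrank_range_add_finrank_ker,
    finrank_fintype_fun_eq_card]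

theorem rankWeight_le_card_support [DecidableEq K] (c : ι → K) :
    rankWeight Fq c ≤ #{j | c j ≠ 0} := by
  calc rankWeight Fq c ≤ finrank Fq (span Fq (({j | c j ≠ 0} : Finset ι).image c : Set K)) := by
        refine Submodule.finrank_mono (span_le.2 ?_)
        rintro _ ⟨j, rfl⟩
        by_cases hj : c j = 0
        · simp [hj]
        · exact subset_span (mem_image_of_mem c (by simpa using hj))
    _ ≤ #(({j | c j ≠ 0} : Finset ι).image c) := finrank_span_finset_le_card _
    _ ≤ #{j | c j ≠ 0} := card_image_le

theorem map_algebraMap_mulVec_eq_linearCombination {ρ : Type*} (V : Matrix ρ ι Fq) (c : ι → K) :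
    V.map (algebraMap Fq K) *ᵥ c = fun i => Fintype.linearCombination Fq c (V i) := by
  ext i
  simp [mulVec, dotProduct, Fintype.linearCombination_apply, Algebra.smul_def]

theorem rank_eq_card_iff_linearIndependent_row {ρ : Type*} [Fintype ρ] (V : Matrix ρ ι Fq) :
    V.rank = Fintype.card ρ ↔ LinearIndependent Fq V.row := by
  rw [rank_eq_finrank_span_row, linearIndependent_iff_card_eq_finrank_span, Set.finrank, eq_comm]

theorem exists_rank_eq_mulVec_eq_zero_iff {ρ : Type*} [Fintype ρ] (c : ι → K) :
    (∃ V : Matrix ρ ι Fq, V.rank = Fintype.card ρ ∧ V.map (algebraMap Fq K) *ᵥ c = 0) ↔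
      rankWeight Fq c + Fintype.card ρ ≤ Fintype.card ι := by
  rw [← rankWeight_add_finrank_ker (Fq := Fq) c, add_le_add_iff_left]
  simp_rw [rank_eq_card_iff_linearIndependent_row, map_algebraMap_mulVec_eq_linearCombination,
    funext_iff, Pi.zero_apply]
  constructor
  · rintro ⟨V, hV, hVc⟩
    exact (LinearIndependent.of_comp (LinearMap.ker _).subtype
      (v := fun i => (⟨V i, hVc i⟩ : LinearMap.ker _)) hV).fintype_card_le_finrank
  · intro hle
    obtain ⟨f, hf⟩ := exists_linearIndependent_of_le_finrank hle
    refine ⟨Matrix.of fun i => (f (Fintype.equivFin ρ i) : ι → Fq), ?_, fun i => (f _).2⟩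
    exact (hf.comp _ (Fintype.equivFin ρ).injective).map' _ (LinearMap.ker _).ker_subtype

end RankWeight

section Criterion

variable {Fq K κ ι : Type*} [Field Fq] [Field K] [Algebra Fq K] [Fintype κ]

theorem vecMul_ne_zero_of_linearIndependent_row {G : Matrix κ ι K} (hG : LinearIndependent K G.row)
    {u : κ → K} (hu : u ≠ 0) : u ᵥ* G ≠ 0 := fun h =>
  hu (funext (Fintype.linearIndependent_iff.1 hG u (by rwa [vecMul_eq_sum] at h)))

variable [Fintype ι]

theorem card_le_card_of_linearIndependent_row {G : Matrix κ ι K} (hG : LinearIndependent K G.row) :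
    Fintype.card κ ≤ Fintype.card ι := by
  simpa using hG.fintype_card_le_finrank

theorem forall_det_ne_zero_iff_forall_lt_rankWeight_add [DecidableEq κ] (G : Matrix κ ι K)
    (hG : LinearIndependent K G.row) :
    (∀ V : Matrix κ ι Fq, V.rank = Fintype.card κ → (V.map (algebraMap Fq K) * Gᵀ).det ≠ 0) ↔
      ∀ c ∈ span K (Set.range G.row), c ≠ 0 →
        Fintype.card ι < rankWeight Fq c + Fintype.card κ := by
  have hcode (u : κ → K) (V : Matrix κ ι Fq) :
      V.map (algebraMap Fq K) *ᵥ (u ᵥ* G) = (V.map (algebraMap Fq K) * Gᵀ) *ᵥ u := by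
    rw [← mulVec_transpose, mulVec_mulVec]
  constructor
  · intro hdet c hc hc0
    obtain ⟨u, rfl⟩ : ∃ u, u ᵥ* G = c := by
      rwa [← range_vecMulLinear, LinearMap.mem_range] at hc
    by_contra! hle
    obtain ⟨V, hV, hVc⟩ := (exists_rank_eq_mulVec_eq_zero_iff (u ᵥ* G)).2 hle
    refine hdet V hV (exists_mulVec_eq_zero_iff.1 ⟨u, ?_, hcode u V ▸ hVc⟩)
    rintro rfl
    exact hc0 (zero_vecMul G)
  · intro hw V hV hdet
    obtain ⟨u, hu0, hVu⟩ := exists_mulVec_eq_zero_iff.2 hdet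
    refine (hw _ (range_vecMulLinear G ▸ ⟨u, rfl⟩)
      (vecMul_ne_zero_of_linearIndependent_row hG hu0)).not_ge ?_
    exact (exists_rank_eq_mulVec_eq_zero_iff _).1 ⟨V, hV, hcode u V ▸ hVu⟩

theorem exists_ne_zero_rankWeight_add_card_le [Nonempty κ] (G : Matrix κ ι K)
    (hG : LinearIndependent K G.row) :
    ∃ c ∈ span K (Set.range G.row), c ≠ 0 ∧
      rankWeight Fq c + Fintype.card κ ≤ Fintype.card ι + 1 := by
  classical
  have hκι := card_le_card_of_linearIndependent_row hG
  obtain ⟨T, -, hT⟩ := exists_subset_card_eq (s := (univ : Finset ι)) (n := Fintype.card κ - 1)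
    (by simp; omega)
  -- Singleton bound: some nonzero codeword vanishes on the `card κ - 1` coordinates in `T`
  let restrict : (κ → K) →ₗ[K] (T → K) := (LinearMap.funLeft K K Subtype.val) ∘ₗ G.vecMulLinear
  obtain ⟨u, hu, hu0⟩ := Submodule.exists_mem_ne_zero_of_ne_bot
    (restrict.ker_ne_bot_of_finrank_lt (by simp [hT, Fintype.card_pos]))
  have hvanish (j : ι) (hj : j ∈ T) : (u ᵥ* G) j = 0 := congrFun hu ⟨j, hj⟩
  refine ⟨u ᵥ* G, range_vecMulLinear G ▸ ⟨u, rfl⟩,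
    vecMul_ne_zero_of_linearIndependent_row hG hu0, ?_⟩
  have hsupp : #{j | (u ᵥ* G) j ≠ 0} ≤ #Tᶜ :=
    card_le_card fun j hj => mem_compl.2 fun hjT => (mem_filter.1 hj).2 (hvanish j hjT)
  have := rankWeight_le_card_support (Fq := Fq) (u ᵥ* G)
  rw [card_compl, hT] at hsupp
  omega

theorem sInf_rankWeight_eq_iff_forall_det_ne_zero [DecidableEq κ] [Nonempty κ] (G : Matrix κ ι K)
    (hG : LinearIndependent K G.row) :
    sInf {w | ∃ c ∈ span K (Set.range G.row), c ≠ 0 ∧ w = rankWeight Fq c} =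
        Fintype.card ι - Fintype.card κ + 1 ↔
      ∀ V : Matrix κ ι Fq, V.rank = Fintype.card κ → (V.map (algebraMap Fq K) * Gᵀ).det ≠ 0 := by
  rw [forall_det_ne_zero_iff_forall_lt_rankWeight_add G hG]
  set S := {w | ∃ c ∈ span K (Set.range G.row), c ≠ 0 ∧ w = rankWeight Fq c}
  have hκι := card_le_card_of_linearIndependent_row hG
  obtain ⟨c₀, hc₀, hc₀0, hc₀w⟩ := exists_ne_zero_rankWeight_add_card_le (Fq := Fq) G hG
  constructor
  · intro h c hc hc0
    have := Nat.sInf_le (show rankWeight Fq c ∈ S from ⟨c, hc, hc0, rfl⟩)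
    omega
  · intro h
    refine IsLeast.csInf_eq ⟨⟨c₀, hc₀, hc₀0, ?_⟩, ?_⟩
    · have := h c₀ hc₀ hc₀0
      omega
    · rintro _ ⟨c, hc, hc0, rfl⟩
      have := h c hc hc0
      omega

end Criterion

section Linearized

open Polynomial

variable {K σ : Type*} [Field K] [Fintype σ]

noncomputable def linearizedPoly (q : ℕ) (a : σ → K) (e : σ → ℕ) : K[X] :=
  ∑ s, C (a s) * X ^ (q ^ e s)

theorem eval_linearizedPoly (q : ℕ) (a : σ → K) (e : σ → ℕ) (x : K) :
    (linearizedPoly q a e).eval x = ∑ s, a s * x ^ q ^ e s := by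
  simp [linearizedPoly, eval_finsetSum]

theorem coeff_linearizedPoly {q : ℕ} (hq : 1 < q) {a : σ → K} {e : σ → ℕ}
    (he : Function.Injective e) (s : σ) : (linearizedPoly q a e).coeff (q ^ e s) = a s := by
  classical
  simp [linearizedPoly, finsetSum_coeff, Nat.pow_right_inj hq, he.eq_iff]

theorem natDegree_linearizedPoly_lt {q n : ℕ} (hq : 1 < q) {a : σ → K} {e : σ → ℕ}
    (hen : ∀ s, e s < n) : (linearizedPoly q a e).natDegree < q ^ n :=
  calc (linearizedPoly q a e).natDegree ≤ q ^ n - 1 :=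
        natDegree_sum_le_of_forall_le _ _ fun s _ => (natDegree_C_mul_X_pow_le _ _).trans
          (Nat.le_sub_one_of_lt (Nat.pow_lt_pow_right hq (hen s)))
    _ < q ^ n := Nat.sub_one_lt (pow_pos (by omega) n).ne'

variable {Fq : Type*} [Field Fq] [Fintype Fq] [Algebra Fq K]

theorem eval_linearizedPoly_eq_zero_of_mem_span {ι : Type*} {α : ι → K} {a : σ → K} {e : σ → ℕ}
    (h : ∀ j, (linearizedPoly (Fintype.card Fq) a e).eval (α j) = 0) {x : K}
    (hx : x ∈ span Fq (Set.range α)) : (linearizedPoly (Fintype.card Fq) a e).eval x = 0 := by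
  let φ : K →ₗ[Fq] K := ∑ s, a s • (FiniteField.frobeniusAlgHom Fq K ^ e s).toLinearMap
  have hφ (y : K) : φ y = (linearizedPoly (Fintype.card Fq) a e).eval y := by
    simp [φ, eval_linearizedPoly, FiniteField.coe_frobeniusAlgHom, pow_iterate]
  have hker : span Fq (Set.range α) ≤ LinearMap.ker φ :=
    span_le.2 (Set.range_subset_iff.2 fun j => by simp [hφ, h j])
  simpa [hφ] using hker hx

theorem eq_zero_of_forall_sum_mul_pow_eq_zero {ι : Type*} [Fintype ι] {α : ι → K}
    (hα : LinearIndependent Fq α) {e : σ → ℕ} (he : Function.Injective e)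
    (hen : ∀ s, e s < Fintype.card ι) {a : σ → K}
    (h : ∀ j, ∑ s, a s * α j ^ Fintype.card Fq ^ e s = 0) : a = 0 := by
  have hq : 1 < Fintype.card Fq := Fintype.one_lt_card
  have hP : linearizedPoly (Fintype.card Fq) a e = 0 := by
    let U := span Fq (Set.range α)
    have : Module.Finite Fq U := FiniteDimensional.span_of_finite Fq (Set.finite_range α)
    have : Finite U := Module.finite_of_finite Fq
    have : Fintype U := Fintype.ofFinite U
    refine eq_zero_of_natDegree_lt_card_of_eval_eq_zero _ (Subtype.val_injective (p := (· ∈ U)))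
      (fun x => eval_linearizedPoly_eq_zero_of_mem_span (fun j => ?_) x.2) ?_
    · rw [eval_linearizedPoly, h j]
    · rw [Fintype.card_eq_nat_card (α := U), Module.natCard_eq_pow_finrank (K := Fq),
        finrank_span_eq_card hα, Nat.card_eq_fintype_card]
      exact natDegree_linearizedPoly_lt hq hen
  funext s
  rw [← coeff_linearizedPoly hq (a := a) he, hP, coeff_zero, Pi.zero_apply]

end Linearized

section Moore

variable {R m κ : Type*} [CommRing R] [DecidableEq κ]

theorem vecMul_updateRow_add [Fintype κ] (A : Matrix κ m R) (i₀ : κ) (d : m → R) (u : κ → R) :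
    u ᵥ* A.updateRow i₀ (A i₀ + d) = u ᵥ* A + u i₀ • d := by
  have hA : A.updateRow i₀ (A i₀ + d) = A + of fun i j => if i = i₀ then d j else 0 := by
    ext i j
    by_cases hi : i = i₀ <;> simp [updateRow_apply, hi]
  ext j
  simp [hA, vecMul, dotProduct, mul_add, Finset.sum_add_distrib]

theorem det_mul_transpose_updateRow_add [Fintype m] [Fintype κ] (B : Matrix κ m R)
    (A : Matrix κ m R) (i₀ : κ) (u v w : m → R) (a b : R) :
    (B * (A.updateRow i₀ (u + a • v + b • w))ᵀ).det =
      (B * (A.updateRow i₀ u)ᵀ).det + a * (B * (A.updateRow i₀ v)ᵀ).det +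
        b * (B * (A.updateRow i₀ w)ᵀ).det := by
  simp only [← updateCol_transpose, mul_updateCol, mulVec_add, mulVec_smul, det_updateCol_add,
    det_updateCol_smul]

variable {K ι : Type*} [Field K]

def mooreMatrix (q k : ℕ) (α : ι → K) : Matrix (Fin k) ι K :=
  of fun i j => α j ^ q ^ (i : ℕ)

theorem updateRow_mooreMatrix_apply {q k h : ℕ} (hh : h < k) (α r : ι → K) (i : Fin k) (j : ι) :
    (mooreMatrix q k α).updateRow ⟨h, hh⟩ r i j =
      if (i : ℕ) = h then r j else α j ^ q ^ (i : ℕ) := by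
  by_cases hi : (i : ℕ) = h <;> simp [mooreMatrix, updateRow_apply, Fin.ext_iff, hi]

variable {Fq σ : Type*} [Field Fq] [Fintype Fq] [Algebra Fq K] [Fintype ι] [Fintype σ]

theorem linearIndependent_updateRow_mooreMatrix {α : ι → K} (hα : LinearIndependent Fq α)
    {k : ℕ} (hk : k ≤ Fintype.card ι) (i₀ : Fin k) {e : σ → ℕ} (he : Function.Injective e)
    (hke : ∀ s, k ≤ e s) (hen : ∀ s, e s < Fintype.card ι) (b : σ → K) :
    LinearIndependent K ((mooreMatrix (Fintype.card Fq) k α).updateRow i₀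
      (mooreMatrix (Fintype.card Fq) k α i₀ +
        ∑ s, b s • fun j => α j ^ Fintype.card Fq ^ e s)).row := by
  rw [Fintype.linearIndependent_iff]
  intro u hu
  unfold Matrix.row at hu
  rw [← vecMul_eq_sum, vecMul_updateRow_add] at hu
  have hsum : Sum.elim u (fun s => u i₀ * b s) = 0 := by
    refine eq_zero_of_forall_sum_mul_pow_eq_zero hα (e := Sum.elim Fin.val e) ?_ ?_ fun j => ?_
    · exact Function.Injective.sumElim Fin.val_injective he fun i s => by
        have := hke s; omega
    · rintro (i | s)
      · exact i.2.trans_le hk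
      · exact hen s
    · simpa [vecMul, dotProduct, mooreMatrix, Finset.mul_sum, mul_assoc, mul_left_comm]
        using congrFun hu j
  exact fun i => congrFun hsum (Sum.inl i)

theorem linearIndependent_updateRow_mooreMatrix_two {α : ι → K} (hα : LinearIndependent Fq α)
    {k s₁ s₂ : ℕ} (i₀ : Fin k) (hk : k ≤ s₁) (hs : s₁ < s₂) (hs₂ : s₂ < Fintype.card ι)
    (η₁ η₂ : K) :
    LinearIndependent K ((mooreMatrix (Fintype.card Fq) k α).updateRow i₀
      (mooreMatrix (Fintype.card Fq) k α i₀ + η₁ • (fun j => α j ^ Fintype.card Fq ^ s₁) +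
        η₂ • fun j => α j ^ Fintype.card Fq ^ s₂)).row := by
  have := linearIndependent_updateRow_mooreMatrix hα (by omega) i₀ (e := ![s₁, s₂])
    (fun a b hab => by fin_cases a <;> fin_cases b <;> simp at hab ⊢ <;> omega)
    (Fin.forall_fin_two.2 ⟨hk, by simp; omega⟩)
    (Fin.forall_fin_two.2 ⟨by simpa using hs.trans hs₂, hs₂⟩) ![η₁, η₂]
  simpa only [Fin.sum_univ_two, Matrix.cons_val_zero, Matrix.cons_val_one, ← add_assoc] using this

end Moore

theorem C2_MRD_iff_general {Fq K : Type*} [Field Fq] [Fintype Fq] [Field K] [Algebra Fq K]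
    (q n k h t₁ t₂ : ℕ) (hq : Fintype.card Fq = q)
    (hh : h < k) (ht : t₁ < t₂) (ht₂ : t₂ < n - k)
    (α : ℕ → K) (hα : LinearIndependent Fq (fun i : Fin n => α (i:ℕ)))
    (η₁ η₂ : K) :
    (sInf {w : ℕ | ∃ c ∈ Submodule.span K (Set.range (fun i : Fin k => fun j : Fin n =>
          if (i:ℕ) = h then
            α (j:ℕ) ^ q ^ h + η₁ * α (j:ℕ) ^ q ^ (k + t₁) + η₂ * α (j:ℕ) ^ q ^ (k + t₂)
          else α (j:ℕ) ^ q ^ (i:ℕ))),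
        c ≠ 0 ∧ w = Module.finrank Fq (Submodule.span Fq (Set.range c))} = n - k + 1)
    ↔
    (∀ V : Matrix (Fin k) (Fin n) Fq, V.rank = k →
      η₁ * (V.map (algebraMap Fq K) *
          Matrix.of (fun (j : Fin n) (i : Fin k) =>
            if (i:ℕ) = h then α (j:ℕ) ^ q ^ (k + t₁) else α (j:ℕ) ^ q ^ (i:ℕ))).det +
      η₂ * (V.map (algebraMap Fq K) *
          Matrix.of (fun (j : Fin n) (i : Fin k) =>
            if (i:ℕ) = h then α (j:ℕ) ^ q ^ (k + t₂) else α (j:ℕ) ^ q ^ (i:ℕ))).det ≠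
      -(V.map (algebraMap Fq K) *
          Matrix.of (fun (j : Fin n) (i : Fin k) => α (j:ℕ) ^ q ^ (i:ℕ))).det) := by
  subst hq
  set M := mooreMatrix (Fintype.card Fq) k fun j : Fin n => α j
  set powRow : ℕ → Fin n → K := fun s j => α j ^ Fintype.card Fq ^ s
  have hN (s : ℕ) : of (fun (j : Fin n) (i : Fin k) =>
      if (i : ℕ) = h then α j ^ Fintype.card Fq ^ s else α j ^ Fintype.card Fq ^ (i : ℕ)) =
        (M.updateRow ⟨h, hh⟩ (powRow s))ᵀ := by
    ext j i
    rw [transpose_apply, updateRow_mooreMatrix_apply]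
    rfl
  have hG : (fun (i : Fin k) (j : Fin n) => if (i : ℕ) = h then
      α j ^ Fintype.card Fq ^ h + η₁ * α j ^ Fintype.card Fq ^ (k + t₁) +
        η₂ * α j ^ Fintype.card Fq ^ (k + t₂) else α j ^ Fintype.card Fq ^ (i : ℕ)) =
      (M.updateRow ⟨h, hh⟩ (M ⟨h, hh⟩ + η₁ • powRow (k + t₁) + η₂ • powRow (k + t₂))).row := by
    funext i j
    rw [row, updateRow_mooreMatrix_apply]
    rfl
  have : Nonempty (Fin k) := ⟨⟨h, hh⟩⟩
  have key := sInf_rankWeight_eq_iff_forall_det_ne_zero (Fq := Fq) _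
    (linearIndependent_updateRow_mooreMatrix_two hα ⟨h, hh⟩ (s₁ := k + t₁) (s₂ := k + t₂)
      (by omega) (by omega) (by rw [Fintype.card_fin]; omega) η₁ η₂)
  rw [Fintype.card_fin, Fintype.card_fin] at key
  rw [hG, hN, hN, show of (fun (j : Fin n) (i : Fin k) => α j ^ Fintype.card Fq ^ (i : ℕ)) = Mᵀ
    from rfl]
  refine key.trans (forall₂_congr fun V _ => ?_)
  rw [det_mul_transpose_updateRow_add, updateRow_eq_self]
  constructor <;> intro hne heq <;> apply hne <;> linear_combination heq

/-- the twisted Gabidulin code `C₂` with two twists is MRD iff for every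
full-rank `V ∈ F_q^{k×n}`,
`η₁ det(V·M^{(h,k+t₁)ᵀ}) + η₂ det(V·M^{(h,k+t₂)ᵀ}) ≠ -det(V·Mᵀ)`. -/
theorem C2_MRD_iff {Fq K : Type*} [Field Fq] [Fintype Fq] [Field K] [Fintype K] [Algebra Fq K]
    (q m n k h t₁ t₂ : ℕ) (hq : Fintype.card Fq = q) (hK : Fintype.card K = q ^ m)
    (hkn : k < n) (hnm : n ≤ m) (hh : h < k) (ht : t₁ < t₂) (ht₂ : t₂ < n - k)
    (α : ℕ → K) (hα : LinearIndependent Fq (fun i : Fin n => α (i:ℕ)))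
    (η₁ η₂ : K) (hη₁ : η₁ ≠ 0) (hη₂ : η₂ ≠ 0) :
    (sInf {w : ℕ | ∃ c ∈ Submodule.span K (Set.range (fun i : Fin k => fun j : Fin n =>
          if (i:ℕ) = h then
            α (j:ℕ) ^ q ^ h + η₁ * α (j:ℕ) ^ q ^ (k + t₁) + η₂ * α (j:ℕ) ^ q ^ (k + t₂)
          else α (j:ℕ) ^ q ^ (i:ℕ))),
        c ≠ 0 ∧ w = Module.finrank Fq (Submodule.span Fq (Set.range c))} = n - k + 1)
    ↔
    (∀ V : Matrix (Fin k) (Fin n) Fq, V.rank = k →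
      η₁ * (V.map (algebraMap Fq K) *
          Matrix.of (fun (j : Fin n) (i : Fin k) =>
            if (i:ℕ) = h then α (j:ℕ) ^ q ^ (k + t₁) else α (j:ℕ) ^ q ^ (i:ℕ))).det +
      η₂ * (V.map (algebraMap Fq K) *
          Matrix.of (fun (j : Fin n) (i : Fin k) =>
            if (i:ℕ) = h then α (j:ℕ) ^ q ^ (k + t₂) else α (j:ℕ) ^ q ^ (i:ℕ))).det ≠
      -(V.map (algebraMap Fq K) *
          Matrix.of (fun (j : Fin n) (i : Fin k) => α (j:ℕ) ^ q ^ (i:ℕ))).det) :=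
  C2_MRD_iff_general q n k h t₁ t₂ hq hh ht ht₂ α hα η₁ η₂
end

section
/- Let q be a prime power, s | m with n ≤ s and F_q ⊊ F_{q^s} ⊊ F_{q^m}. Let k < n, α_1,...,α_n ∈ F_{q^s} linearly independent over F_q, η₁ ∈ F_{q^m} \ F_{q^s}, b ∈ F_{q^s}*, and η₂ = b·η₁. Fix 0 ≤ h ≤ k-1, 0 ≤ t₁ < t₂ ≤ n-k-1. Then the twisted Gabidulin code C₂ with two twists η₁, η₂ at position h (generator: Moore rows (α_j^{q^i})_j for i ≠ h, plus the row (α_j^{q^h} + η₁ α_j^{q^{k+t₁}} + η₂ α_j^{q^{k+t₂}})_j) is MRD. -/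
/-!
A nonzero codeword is `(L β₁, …, L βₙ)` for the `F_q`-linear map `L = ∑ λᵢ Gᵢ`, where `Gᵢ` is the
`q`-linearized polynomial of the `i`-th row, so its rank is `n - dim (ker L ∩ V)` with
`V = span β`. If that kernel had dimension `≥ k`, any `k` independent `γⱼ` in it would make the
matrix `(Gᵢ γⱼ)` singular. But the `γⱼ` lie in `F_{q^s}` and `η₂ = b η₁` with `b ∈ F_{q^s}`, so
expanding along the twisted row gives `det = D₀ + η₁ D₁` with `D₀, D₁ ∈ F_{q^s}` and `D₀` a nonzero
Moore determinant; this cannot vanish since `η₁ ∉ F_{q^s}`. The Singleton bound gives the matching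
upper bound.
-/

open Finset

section Frobenius

variable (Fq : Type*) {K : Type*} [Field Fq] [Fintype Fq] [Field K] [Algebra Fq K]

noncomputable def frobeniusPow (j : ℕ) : K →ₗ[Fq] K :=
  (FiniteField.frobeniusAlgHom Fq K ^ j).toLinearMap

@[simp] lemma frobeniusPow_apply (j : ℕ) (x : K) :
    frobeniusPow Fq j x = x ^ Fintype.card Fq ^ j := by
  simp [frobeniusPow, FiniteField.coe_frobeniusAlgHom, pow_iterate]

end Frobenius

section Moore

open Polynomial

variable {Fq K : Type*} [Field Fq] [Fintype Fq] [Field K] [Algebra Fq K]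

theorem Polynomial.card_pow_finrank_le_natDegree {P : K[X]} (hP : P ≠ 0)
    (W : Submodule Fq K) [Module.Finite Fq W] (hW : ∀ x ∈ W, P.IsRoot x) :
    Fintype.card Fq ^ Module.finrank Fq W ≤ P.natDegree := by
  classical
  calc Fintype.card Fq ^ Module.finrank Fq W = Nat.card W := by
        rw [Module.natCard_eq_pow_finrank (K := Fq), Nat.card_eq_fintype_card]
    _ = (W : Set K).ncard := Nat.card_coe_set_eq _
    _ ≤ (P.roots.toFinset : Set K).ncard :=
        Set.ncard_le_ncard (fun x hx => by simpa [hP] using hW x hx) (Finset.finite_toSet _)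
    _ ≤ P.natDegree := by
        rw [Set.ncard_coe_finset]
        exact (Multiset.toFinset_card_le _).trans (card_roots' P)

theorem Matrix.det_moore_ne_zero {k : ℕ} {γ : Fin k → K} (hγ : LinearIndependent Fq γ) :
    (Matrix.of fun i j : Fin k => γ j ^ Fintype.card Fq ^ (i : ℕ)).det ≠ 0 := by
  intro hdet
  obtain ⟨v, hv, hvM⟩ := Matrix.exists_vecMul_eq_zero_iff.2 hdet
  obtain ⟨i₀, hi₀⟩ := Function.ne_iff.1 hv
  rw [Pi.zero_apply] at hi₀
  have hk : 0 < k := i₀.pos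
  have hq : 1 < Fintype.card Fq := Fintype.one_lt_card
  -- a nonzero `q`-polynomial of degree `≤ q ^ (k - 1)` vanishing on the `q ^ k` points of `span γ`
  set P : K[X] := ∑ i : Fin k, C (v i) * X ^ Fintype.card Fq ^ (i : ℕ)
  have hP_eval : ∀ x, P.eval x = (∑ i, v i • frobeniusPow Fq (i : ℕ)) x := by
    intro x; simp [P, eval_finsetSum, LinearMap.sum_apply]
  have hP_coeff : P.coeff (Fintype.card Fq ^ (i₀ : ℕ)) = v i₀ := by
    simp [P, coeff_C_mul, coeff_X_pow, (Nat.pow_right_injective hq).eq_iff,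
      Fin.val_inj]
  have hP_deg : P.natDegree ≤ Fintype.card Fq ^ (k - 1) :=
    natDegree_sum_le_of_forall_le _ _ fun i _ => (natDegree_C_mul_X_pow_le _ _).trans
      (Nat.pow_le_pow_right (by omega) (by omega))
  have hroots : ∀ x ∈ Submodule.span Fq (Set.range γ), P.IsRoot x := by
    intro x hx
    refine (hP_eval x).trans (LinearMap.mem_ker.1 ((Submodule.span_le.2 ?_) hx))
    rintro _ ⟨j, rfl⟩
    simpa [Matrix.vecMul, dotProduct, LinearMap.sum_apply] using congrFun hvM j
  have := FiniteDimensional.span_of_finite Fq (Set.finite_range γ)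
  have := (card_pow_finrank_le_natDegree
    (fun h0 => hi₀ (by rw [← hP_coeff, h0, coeff_zero])) _ hroots).trans hP_deg
  rw [finrank_span_eq_card hγ, Fintype.card_fin, Nat.pow_le_pow_iff_right hq] at this
  omega

end Moore

section SingletonBound

variable {Fq K : Type*} [Field Fq] [Field K] [Module Fq K]

theorem finrank_span_range_le_card {ι : Type*} (c : ι → K) (S : Finset ι)
    (hS : ∀ j ∉ S, c j = 0) : Module.finrank Fq (Submodule.span Fq (Set.range c)) ≤ #S := by
  classical
  have hsub : Set.range c ⊆ insert 0 (S.image c : Set K) := by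
    rintro _ ⟨j, rfl⟩
    by_cases hj : j ∈ S
    · exact Set.mem_insert_of_mem _ (Finset.mem_coe.2 (Finset.mem_image_of_mem c hj))
    · exact Set.mem_insert_iff.2 (Or.inl (hS j hj))
  calc Module.finrank Fq (Submodule.span Fq (Set.range c))
      ≤ Module.finrank Fq (Submodule.span Fq (S.image c : Set K)) :=
        Submodule.finrank_mono ((Submodule.span_mono hsub).trans_eq Submodule.span_insert_zero)
    _ ≤ #(S.image c) := finrank_span_finset_le_card _
    _ ≤ #S := Finset.card_image_le

theorem exists_ne_zero_finrank_span_range_add_le {ι : Type*} [Fintype ι]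
    (C : Submodule K (ι → K)) (hC : 0 < Module.finrank K C) :
    ∃ c ∈ C, c ≠ 0 ∧
      Module.finrank Fq (Submodule.span Fq (Set.range c)) + Module.finrank K C ≤
        Fintype.card ι + 1 := by
  classical
  have hCle : Module.finrank K C ≤ Fintype.card ι := by
    simpa using Submodule.finrank_le C
  obtain ⟨S, -, hS⟩ := Finset.exists_subset_card_eq (s := (Finset.univ : Finset ι))
    (n := Module.finrank K C - 1) (by simp; omega)
  set π : (ι → K) →ₗ[K] (S → K) := LinearMap.funLeft K K Subtype.val
  have hπ : ¬ Function.Injective (π.domRestrict C) := fun hinj => by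
    have := LinearMap.finrank_le_finrank_of_injective hinj
    simp only [Module.finrank_fintype_fun_eq_card, Fintype.card_coe] at this
    omega
  rw [injective_iff_map_eq_zero] at hπ
  push Not at hπ
  obtain ⟨⟨c, hcC⟩, hπc, hc⟩ := hπ
  refine ⟨c, hcC, fun h0 => hc (Subtype.ext h0), ?_⟩
  have hcS : ∀ j ∉ Sᶜ, c j = 0 := fun j hj =>
    congrFun hπc ⟨j, by simpa using hj⟩
  have := finrank_span_range_le_card (Fq := Fq) c Sᶜ hcS
  rw [Finset.card_compl] at this
  omega

theorem sInf_finrank_span_range_eq_of_lt {ι : Type*} [Fintype ι] {C : Submodule K (ι → K)}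
    (hC : 0 < Module.finrank K C)
    (hlow : ∀ c ∈ C, c ≠ 0 →
      Fintype.card ι < Module.finrank Fq (Submodule.span Fq (Set.range c)) + Module.finrank K C) :
    sInf {w : ℕ | ∃ c ∈ C, c ≠ 0 ∧ w = Module.finrank Fq (Submodule.span Fq (Set.range c))} =
      Fintype.card ι + 1 - Module.finrank K C := by
  obtain ⟨c, hcC, hc, hrank⟩ := exists_ne_zero_finrank_span_range_add_le (Fq := Fq) C hC
  apply le_antisymm
  · calc _ ≤ Module.finrank Fq (Submodule.span Fq (Set.range c)) :=
          by apply Nat.sInf_le; exact ⟨c, hcC, hc, rfl⟩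
      _ ≤ _ := by omega
  · refine le_csInf ⟨_, c, hcC, hc, rfl⟩ ?_
    rintro _ ⟨c', hc'C, hc', rfl⟩
    have := hlow c' hc'C hc'
    omega

end SingletonBound

section RankMetric

variable {Fq K : Type*} [Field Fq] [Field K] [Algebra Fq K] {k : ℕ}

theorem finrank_lt_finrank_map_sum_smul_add (G : Fin k → K →ₗ[Fq] K)
    (V : Submodule Fq K) [FiniteDimensional Fq V]
    (hG : ∀ γ : Fin k → K, LinearIndependent Fq γ → (∀ j, γ j ∈ V) →
      (Matrix.of fun i j => G i (γ j)).det ≠ 0)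
    {lam : Fin k → K} (hlam : lam ≠ 0) :
    Module.finrank Fq V < Module.finrank Fq (V.map (∑ i, lam i • G i)) + k := by
  set L := ∑ i, lam i • G i
  have hrank := LinearMap.finrank_range_add_finrank_ker (L.domRestrict V)
  rw [LinearMap.range_domRestrict] at hrank
  suffices Module.finrank Fq (LinearMap.ker (L.domRestrict V)) < k by omega
  by_contra! hker
  obtain ⟨f, hf⟩ := exists_linearIndependent_of_le_finrank hker
  have hγ : LinearIndependent Fq (fun j => ((f j : V) : K)) :=
    (hf.map_injOn _ (Submodule.injective_subtype _).injOn).map_injOn _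
      (Submodule.injective_subtype _).injOn
  refine hG _ hγ (fun j => (f j : V).2) (Matrix.exists_vecMul_eq_zero_iff.1 ⟨lam, hlam, ?_⟩)
  ext j
  have hLf : L (f j : V) = 0 := (f j).2
  simpa [Matrix.vecMul, dotProduct, L, LinearMap.sum_apply] using hLf

theorem lt_finrank_span_range_sum_smul_add {n : ℕ} (G : Fin k → K →ₗ[Fq] K) {B : Fin n → K}
    (hB : LinearIndependent Fq B)
    (hG : ∀ γ : Fin k → K, LinearIndependent Fq γ → (∀ j, γ j ∈ Submodule.span Fq (Set.range B)) →
      (Matrix.of fun i j => G i (γ j)).det ≠ 0)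
    {lam : Fin k → K} (hlam : lam ≠ 0) :
    n < Module.finrank Fq (Submodule.span Fq (Set.range (∑ i, lam i • fun j => G i (B j))))
      + k := by
  have := FiniteDimensional.span_of_finite Fq (Set.finite_range B)
  have hcodeword : Submodule.span Fq (Set.range (∑ i, lam i • fun j => G i (B j))) =
      (Submodule.span Fq (Set.range B)).map (∑ i, lam i • G i) := by
    rw [Submodule.map_span, ← Set.range_comp]
    congr 2
    ext j
    simp [Finset.sum_apply]
  rw [hcodeword]
  simpa [finrank_span_eq_card hB] using finrank_lt_finrank_map_sum_smul_add G _ hG hlam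

theorem sInf_finrank_span_range_evalRows_eq {n : ℕ} (G : Fin k → K →ₗ[Fq] K) {B : Fin n → K}
    (hB : LinearIndependent Fq B)
    (hG : ∀ γ : Fin k → K, LinearIndependent Fq γ → (∀ j, γ j ∈ Submodule.span Fq (Set.range B)) →
      (Matrix.of fun i j => G i (γ j)).det ≠ 0)
    (hk : 0 < k) (hkn : k ≤ n) :
    sInf {w : ℕ | ∃ c ∈ Submodule.span K (Set.range fun i j => G i (B j)), c ≠ 0 ∧
      w = Module.finrank Fq (Submodule.span Fq (Set.range c))} = n - k + 1 := by
  have hindep : LinearIndependent K fun i j => G i (B j) := by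
    refine Fintype.linearIndependent_iff.2 fun lam hsum => ?_
    suffices lam = 0 from fun i => congrFun this i
    by_contra hlam
    have := lt_finrank_span_range_sum_smul_add G hB hG hlam
    rw [hsum, Submodule.span_eq_bot.2 (by rintro _ ⟨j, rfl⟩; rfl), finrank_bot] at this
    omega
  have hC : Module.finrank K (Submodule.span K (Set.range fun i j => G i (B j))) = k := by
    rw [finrank_span_eq_card hindep, Fintype.card_fin]
  rw [sInf_finrank_span_range_eq_of_lt (by rw [hC]; exact hk) fun c hc hc0 => by
    obtain ⟨lam, rfl⟩ := (Submodule.mem_span_range_iff_exists_fun K).1 hc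
    rw [hC, Fintype.card_fin]
    exact lt_finrank_span_range_sum_smul_add G hB hG (by rintro rfl; simp at hc0)]
  rw [hC, Fintype.card_fin]
  omega

end RankMetric

theorem Matrix.det_map_updateRow_add_mul_ne_zero {Fs K n : Type*} [Field Fs] [Field K]
    [Algebra Fs K] [Fintype n] [DecidableEq n] {A : Matrix n n Fs} (hA : A.det ≠ 0) (j : n)
    (w : n → Fs) {η : K} (hη : η ∉ Set.range (algebraMap Fs K)) :
    ((A.map (algebraMap Fs K)).updateRow j
      (fun l => algebraMap Fs K (A j l) + η * algebraMap Fs K (w l))).det ≠ 0 := by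
  set f := algebraMap Fs K
  have hsplit : ((A.map f).updateRow j (fun l => f (A j l) + η * f (w l))).det =
      f A.det + η * f (A.updateRow j w).det := by
    have hrow : (fun l => f (A j l) + η * f (w l)) = A.map f j + η • (f ∘ w) := rfl
    rw [hrow, det_updateRow_add, det_updateRow_smul, updateRow_eq_self, RingHom.map_det,
      RingHom.map_det, RingHom.mapMatrix_apply, RingHom.mapMatrix_apply, map_updateRow]
  intro h0
  rw [hsplit] at h0
  by_cases hD : (A.updateRow j w).det = 0
  · rw [hD, map_zero, mul_zero, add_zero, map_eq_zero] at h0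
    exact hA h0
  · refine hη ⟨-(A.det / (A.updateRow j w).det), ?_⟩
    have hfD : f (A.updateRow j w).det ≠ 0 := (map_ne_zero f).2 hD
    rw [map_neg, map_div₀, neg_eq_iff_eq_neg, div_eq_iff hfD]
    linear_combination h0

section TwistedGabidulin

variable (Fq : Type*) {Fs K : Type*} [Field Fq] [Fintype Fq] [Field Fs] [Field K]
  [Algebra Fq Fs] [Algebra Fs K] [Algebra Fq K] [IsScalarTower Fq Fs K]

noncomputable def twistedMooreRow (h e₁ e₂ : ℕ) (η₁ η₂ : K) (i : ℕ) : K →ₗ[Fq] K :=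
  if i = h then frobeniusPow Fq h + η₁ • frobeniusPow Fq e₁ + η₂ • frobeniusPow Fq e₂
  else frobeniusPow Fq i

theorem det_twistedMooreRow_ne_zero {k h : ℕ} (hh : h < k) (e₁ e₂ : ℕ) {η₁ : K}
    (hη₁ : η₁ ∉ Set.range (algebraMap Fs K)) (b : Fs) {γ : Fin k → K}
    (hγ : LinearIndependent Fq γ) (hγFs : ∀ j, γ j ∈ Set.range (algebraMap Fs K)) :
    (Matrix.of fun i j : Fin k =>
      twistedMooreRow Fq h e₁ e₂ η₁ (algebraMap Fs K b * η₁) i (γ j)).det ≠ 0 := by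
  choose δ hδ using hγFs
  have hδ_indep : LinearIndependent Fq δ := by
    refine LinearIndependent.of_comp (IsScalarTower.toAlgHom Fq Fs K).toLinearMap ?_
    convert hγ
    ext j
    exact hδ j
  -- as `η₂ = b η₁`, both twists combine into `η₁` times a row over `Fs`
  convert Matrix.det_map_updateRow_add_mul_ne_zero (Matrix.det_moore_ne_zero hδ_indep) ⟨h, hh⟩
    (fun l => δ l ^ Fintype.card Fq ^ e₁ + b * δ l ^ Fintype.card Fq ^ e₂) hη₁ using 2
  ext i l
  by_cases hi : (i : ℕ) = h
  · have hi' : i = ⟨h, hh⟩ := Fin.ext hi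
    subst hi'
    simp [twistedMooreRow, ← hδ]
    ring
  · have hi' : i ≠ ⟨h, hh⟩ := fun h' => hi (congrArg Fin.val h')
    simp [twistedMooreRow, hi, hi', ← hδ]

end TwistedGabidulin

theorem C2_proportional_MRD_general {Fq Fs K : Type*} [Field Fq] [Fintype Fq] [Field Fs]
    [Field K] [Algebra Fq Fs] [Algebra Fs K] [Algebra Fq K] [IsScalarTower Fq Fs K]
    (q n k h t₁ t₂ : ℕ) (hq : Fintype.card Fq = q)
    (hkn : k < n) (hh : h < k)
    (β : ℕ → Fs) (hβ : LinearIndependent Fq (fun i : Fin n => β (i:ℕ)))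
    (η₁ η₂ : K) (hη₁ : η₁ ∉ Set.range (algebraMap Fs K))
    (b : Fs) (hη₂ : η₂ = algebraMap Fs K b * η₁) :
    sInf {w : ℕ | ∃ c ∈ Submodule.span K (Set.range (fun i : Fin k => fun j : Fin n =>
          if (i:ℕ) = h then
            algebraMap Fs K (β (j:ℕ)) ^ q ^ h + η₁ * algebraMap Fs K (β (j:ℕ)) ^ q ^ (k + t₁)
              + η₂ * algebraMap Fs K (β (j:ℕ)) ^ q ^ (k + t₂)
          else algebraMap Fs K (β (j:ℕ)) ^ q ^ (i:ℕ))),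
        c ≠ 0 ∧ w = Module.finrank Fq (Submodule.span Fq (Set.range c))} = n - k + 1 := by
  subst hq hη₂
  set B : Fin n → K := fun j => algebraMap Fs K (β j)
  set G : Fin k → K →ₗ[Fq] K :=
    fun i => twistedMooreRow Fq h (k + t₁) (k + t₂) η₁ (algebraMap Fs K b * η₁) i
  have hrows : (fun (i : Fin k) (j : Fin n) =>
      if (i : ℕ) = h then
        B j ^ Fintype.card Fq ^ h + η₁ * B j ^ Fintype.card Fq ^ (k + t₁)
          + algebraMap Fs K b * η₁ * B j ^ Fintype.card Fq ^ (k + t₂)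
      else B j ^ Fintype.card Fq ^ (i : ℕ)) = fun i j => G i (B j) := by
    ext i j
    split_ifs with hi <;> simp [G, twistedMooreRow, hi, mul_assoc]
  rw [hrows]
  have hV_Fs : Submodule.span Fq (Set.range B) ≤
      LinearMap.range (IsScalarTower.toAlgHom Fq Fs K).toLinearMap :=
    Submodule.span_le.2 (Set.range_subset_iff.2 fun j => ⟨β j, rfl⟩)
  refine sInf_finrank_span_range_evalRows_eq G ?_ (fun γ hγ hγV =>
    det_twistedMooreRow_ne_zero Fq hh _ _ hη₁ b hγ fun j => hV_Fs (hγV j)) (by omega) hkn.le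
  exact hβ.map' (IsScalarTower.toAlgHom Fq Fs K).toLinearMap
    (LinearMap.ker_eq_bot.2 (algebraMap Fs K).injective)

/-- with evaluation points in an intermediate subfield `F_{q^s}` (`n ≤ s`),
`η₁ ∈ F_{q^m} \ F_{q^s}`, `b ∈ F_{q^s}*` and `η₂ = b·η₁`, the twisted Gabidulin code `C₂`
with two twists is MRD. -/
theorem C2_proportional_MRD {Fq Fs K : Type*} [Field Fq] [Fintype Fq] [Field Fs] [Fintype Fs]
    [Field K] [Fintype K] [Algebra Fq Fs] [Algebra Fs K] [Algebra Fq K] [IsScalarTower Fq Fs K]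
    (q s m n k h t₁ t₂ : ℕ) (hq : Fintype.card Fq = q) (hFs : Fintype.card Fs = q ^ s)
    (hK : Fintype.card K = q ^ m) (hs1 : 1 < s) (hsm : s < m) (hsd : s ∣ m)
    (hns : n ≤ s) (hkn : k < n) (hh : h < k) (ht : t₁ < t₂) (ht₂ : t₂ < n - k)
    (β : ℕ → Fs) (hβ : LinearIndependent Fq (fun i : Fin n => β (i:ℕ)))
    (η₁ η₂ : K) (hη₁ : η₁ ∉ Set.range (algebraMap Fs K))
    (b : Fs) (hb : b ≠ 0) (hη₂ : η₂ = algebraMap Fs K b * η₁) :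
    sInf {w : ℕ | ∃ c ∈ Submodule.span K (Set.range (fun i : Fin k => fun j : Fin n =>
          if (i:ℕ) = h then
            algebraMap Fs K (β (j:ℕ)) ^ q ^ h + η₁ * algebraMap Fs K (β (j:ℕ)) ^ q ^ (k + t₁)
              + η₂ * algebraMap Fs K (β (j:ℕ)) ^ q ^ (k + t₂)
          else algebraMap Fs K (β (j:ℕ)) ^ q ^ (i:ℕ))),
        c ≠ 0 ∧ w = Module.finrank Fq (Submodule.span Fq (Set.range c))} = n - k + 1 :=
  C2_proportional_MRD_general q n k h t₁ t₂ hq hkn hh β hβ η₁ η₂ hη₁ b hη₂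
end
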